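/- Hamilton–Jacobi PDE for the symplectic Euler modified Hamiltonian of the harmonic oscillator (instance of Proposition 2(a)): for t ∈ (−π/2, π/2) with t ≠ 0, define Ĥ_SE(p,q,t) = (sin t·(p² + q²)/2 + (1 − cos t)·p·q)/(t·cos t). Then for all (p,q) ∈ ℝ² and all such t, ∂/∂t [t·Ĥ_SE(p,q,t)] = H(p, q + t·∂Ĥ_SE/∂p(p,q,t)), where H(p,q) = (p² + q²)/2; explicitly, both sides equal sec²t·(p² + q²)/2 + sec t·tan t·p·q. -/

import Mathlib

noncomputable section

/-- The time-dependent modified Hamiltonian of the symplectic Euler method for the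
harmonic oscillator. -/
def HSE (p q t : ℝ) : ℝ :=
  (Real.sin t * (p ^ 2 + q ^ 2) / 2 + (1 - Real.cos t) * p * q) / (t * Real.cos t)

/-!
Away from `t = 0`, `t · Ĥ_SE = H(p,q) · tan t + p q · (sec t - 1)`, whose `t`-derivative is
`H(p,q) · sec² t + p q · sec t tan t`. On the other side, `q + t · ∂Ĥ_SE/∂p = (q + p sin t) / cos t`,
so `H(p, q + t · ∂Ĥ_SE/∂p) = (p² cos² t + (q + p sin t)²) / (2 cos² t)`, which is the same
expression once `sin² t + cos² t = 1` is used.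
-/

open Real

lemma mul_HSE_eq {s : ℝ} (p q : ℝ) (hs : s ≠ 0) (hcos : cos s ≠ 0) :
    s * HSE p q s = (p ^ 2 + q ^ 2) / 2 * tan s + p * q * (1 / cos s - 1) := by
  rw [HSE, tan_eq_sin_div_cos]
  field_simp

lemma hasDerivAt_mul_HSE {t : ℝ} (p q : ℝ) (ht0 : t ≠ 0) (hcos : cos t ≠ 0) :
    HasDerivAt (fun s => s * HSE p q s)
      ((1 / cos t) ^ 2 * (p ^ 2 + q ^ 2) / 2 + (1 / cos t) * tan t * p * q) t := by
  have hsec : HasDerivAt (fun s => 1 / cos s) (sin t / cos t ^ 2) t := by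
    simpa [one_div] using (hasDerivAt_cos t).fun_inv hcos
  have hrhs := (((hasDerivAt_tan hcos).const_mul ((p ^ 2 + q ^ 2) / 2)).add
    ((hsec.sub_const 1).const_mul (p * q)))
  have heq : (fun s => s * HSE p q s) =ᶠ[nhds t]
      fun s => (p ^ 2 + q ^ 2) / 2 * tan s + p * q * (1 / cos s - 1) := by
    filter_upwards [eventually_ne_nhds ht0, continuous_cos.continuousAt.eventually_ne hcos]
      with s hs hcos_s using mul_HSE_eq p q hs hcos_s
  refine (hrhs.congr_of_eventuallyEq heq).congr_deriv ?_
  rw [tan_eq_sin_div_cos]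
  field_simp

lemma hasDerivAt_HSE_momentum (p q t : ℝ) :
    HasDerivAt (fun P => HSE P q t) ((sin t * p + (1 - cos t) * q) / (t * cos t)) p := by
  have hnum : HasDerivAt (fun P => sin t * (P ^ 2 + q ^ 2) / 2 + (1 - cos t) * P * q)
      (sin t * p + (1 - cos t) * q) p := by
    have hsq := ((hasDerivAt_pow 2 p).add_const (q ^ 2)).const_mul (sin t)
    refine ((hsq.div_const 2).add (((hasDerivAt_id p).const_mul (1 - cos t)).mul_const q))
      |>.congr_deriv ?_
    ring
  exact hnum.div_const (t * cos t)

theorem stmt11 (t : ℝ) (ht : t ∈ Set.Ioo (-(Real.pi / 2)) (Real.pi / 2)) (ht0 : t ≠ 0) :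
    ∀ p q : ℝ,
      deriv (fun s => s * HSE p q s) t =
          (p ^ 2 + (q + t * deriv (fun P => HSE P q t) p) ^ 2) / 2 ∧
        deriv (fun s => s * HSE p q s) t =
          (1 / Real.cos t) ^ 2 * (p ^ 2 + q ^ 2) / 2 +
            (1 / Real.cos t) * (Real.tan t) * p * q := by
  intro p q
  have hcos : cos t ≠ 0 := (cos_pos_of_mem_Ioo ht).ne'
  rw [(hasDerivAt_mul_HSE p q ht0 hcos).deriv, (hasDerivAt_HSE_momentum p q t).deriv]
  refine ⟨?_, rfl⟩
  rw [tan_eq_sin_div_cos]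
  field_simp
  linear_combination -p ^ 2 * sin_sq_add_cos_sq t
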